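/- Suppose the real numbers 1, c, τ are linearly independent over ℚ, and r ∈ ℝ does not lie in the ℚ-vector space ℚ + cℚ + τℚ. Then there exist no matrix (a b; c' d) in SL(2,ℤ) and integers e, f, y, z such that a + r·c' + c·(e·c' − a·f) + y·τ = r and b + r·d + c·(e·d − b·f) + z·τ = 1. -/
import Mathlib


/-- If `1, c, τ` are linearly independent over `ℚ` and `r ∉ ℚ + cℚ + τℚ`, then there
are no `SL(2,ℤ)` matrix `(a b; c' d)` and integers `e, f, y, z` with
`a + r·c' + c·(e·c' − a·f) + y·τ = r` and `b + r·d + c·(e·d − b·f) + z·τ = 1`. -/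
theorem deRham_invariant_orbits_distinct
    (c τ r : ℝ)
    (hindep : LinearIndependent ℚ ![(1 : ℝ), c, τ])
    (hr : ¬ ∃ q₁ q₂ q₃ : ℚ, r = (q₁ : ℝ) + c * (q₂ : ℝ) + τ * (q₃ : ℝ)) :
    ¬ ∃ (a b c' d e f y z : ℤ), a * d - b * c' = 1 ∧
      (a : ℝ) + r * (c' : ℝ) + c * ((e : ℝ) * (c' : ℝ) - (a : ℝ) * (f : ℝ)) + (y : ℝ) * τ = r ∧
      (b : ℝ) + r * (d : ℝ) + c * ((e : ℝ) * (d : ℝ) - (b : ℝ) * (f : ℝ)) + (z : ℝ) * τ = 1 := by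
  rintro ⟨a, b, c', d, e, f, y, z, hdet, h1, h2⟩
  have hkey : ∀ q1 q2 q3 : ℚ, (q1 : ℝ) + c * (q2 : ℝ) + τ * (q3 : ℝ) = 0 →
      q1 = 0 ∧ q2 = 0 ∧ q3 = 0 := by
    intro q1 q2 q3 h
    have h' := Fintype.linearIndependent_iff.mp hindep ![q1, q2, q3] ?_
    · exact ⟨h' 0, h' 1, h' 2⟩
    · simp only [Fin.sum_univ_three, Matrix.cons_val_zero, Matrix.cons_val_one,
        Matrix.head_cons, Matrix.cons_val_two, Matrix.tail_cons, Rat.smul_def]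
      nlinarith [h]
  -- first: c' = 1
  have hc' : c' = 1 := by
    by_contra hne
    apply hr
    have hden : ((1 : ℝ) - (c' : ℝ)) ≠ 0 := by
      intro h0
      apply hne
      have : (c' : ℝ) = 1 := by linarith
      exact_mod_cast this
    refine ⟨(a : ℚ) / (1 - (c' : ℚ)), ((e : ℚ) * c' - a * f) / (1 - (c' : ℚ)),
      (y : ℚ) / (1 - (c' : ℚ)), ?_⟩
    push_cast
    field_simp
    ring_nf
    ring_nf at h1
    linarith [h1]
  have hc'R : (c' : ℝ) = 1 := by exact_mod_cast hc'
  rw [hc'R] at h1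
  -- from h1 : a + c (e - a f) + y τ = 0
  have heq0 : ((a : ℚ) : ℝ) + c * (((e : ℚ) - a * f : ℚ) : ℝ) + τ * ((y : ℚ) : ℝ) = 0 := by
    push_cast
    nlinarith [h1]
  obtain ⟨ha, hef, hy⟩ := hkey _ _ _ heq0
  have haZ : a = 0 := by exact_mod_cast ha
  have heZ : e = 0 := by
    have h' : (e : ℚ) = (a : ℚ) * f := by linarith [hef]
    rw [haZ] at h'
    norm_num at h'
    exact_mod_cast h'
  -- det: b = -1
  have hbZ : b = -1 := by
    rw [haZ, hc'] at hdet
    omega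
  rw [heZ, hbZ] at h2
  push_cast at h2
  -- h2 : -1 + r * d + c * (0 * d - (-1) * f) + z * τ = 1
  by_cases hd : d = 0
  · rw [hd] at h2
    push_cast at h2
    have : ((-2 : ℚ) : ℝ) + c * ((f : ℚ) : ℝ) + τ * ((z : ℚ) : ℝ) = 0 := by
      push_cast
      nlinarith [h2]
    have := (hkey _ _ _ this).1
    norm_num at this
  · apply hr
    have hdR : (d : ℝ) ≠ 0 := Int.cast_ne_zero.mpr hd
    refine ⟨2 / (d : ℚ), -(f : ℚ) / (d : ℚ), -(z : ℚ) / (d : ℚ), ?_⟩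
    push_cast
    field_simp
    ring_nf
    ring_nf at h2
    linarith [h2]
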